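/- Fix an integer a ≥ 2 and let x ∈ (1, a) be a rational number all of whose partial quotients in its canonical continued fraction expansion are ≤ a − 1 (so that 1/x ∈ (0, 1) also has all partial quotients ≤ a − 1). Then ν^+(1/x) = 1/ν^−(x) and ν^−(1/x) = 1/ν^+(x). -/
import Mathlib


/-- One step of the Gauss continued-fraction algorithm (returns `0` upon termination). -/
noncomputable def cfStep (y : ℝ) : ℝ := if Int.fract y = 0 then 0 else (Int.fract y)⁻¹

/-- Iterates of the Gauss map used to compute the canonical continued fraction of `x`. -/
noncomputable def cfIter (x : ℝ) : ℕ → ℝ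
  | 0 => x
  | n + 1 => cfStep (cfIter x n)

/-- The `n`-th partial quotient of the canonical continued fraction expansion of `x`
(by convention it is `0` past the end of a finite expansion). -/
noncomputable def pquot (x : ℝ) (n : ℕ) : ℤ := ⌊cfIter x n⌋

/-- Value of a finite continued fraction `[a₀; a₁, …, aₙ]`. -/
noncomputable def cfEval : List ℤ → ℝ
  | [] => 0
  | [a] => (a : ℝ)
  | a :: l => (a : ℝ) + (cfEval l)⁻¹

/-- The canonical continued fraction expansion of `x` is exactly `[A 0; A 1, …, A n]`. -/
def IsCanonCF (x : ℝ) (A : ℕ → ℤ) (n : ℕ) : Prop :=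
  (∀ i ≤ n, pquot x i = A i) ∧ Int.fract (cfIter x n) = 0 ∧ ∀ i < n, Int.fract (cfIter x i) ≠ 0

/-- The `n`-th convergent `pₙ/qₙ = [x₀; x₁, …, xₙ]` of `x`. -/
noncomputable def cfConv (x : ℝ) (n : ℕ) : ℝ := cfEval ((List.range (n + 1)).map (pquot x))

open scoped Classical in
/-- The resolution map `r_a`: truncate the canonical continued fraction expansion just
before the first partial quotient `xᵢ` (`i ≥ 1`) with `xᵢ ≥ a`; identity otherwise. -/
noncomputable def ra (a : ℕ) (x : ℝ) : ℝ :=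
  if h : ∃ i, 1 ≤ i ∧ (a : ℤ) ≤ pquot x i then
    cfEval ((List.range (Nat.find h)).map (pquot x))
  else x

/-- The locking zone `Z_a(r) = {x ∈ [0, a) : r_a(x) = r}`. -/
noncomputable def lockZone (a : ℕ) (r : ℝ) : Set ℝ :=
  {x | x ∈ Set.Ico (0 : ℝ) (a : ℝ) ∧ ra a x = r}

/-- Right boundary `ν⁺` of a locking zone. -/
noncomputable def nuPlus (a : ℕ) (r : ℝ) : ℝ := sSup (lockZone a r)

/-- Left boundary `ν⁻` of a locking zone. -/
noncomputable def nuMinus (a : ℕ) (r : ℝ) : ℝ := sInf (lockZone a r)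

lemma cfEval_singleton (a : ℤ) : cfEval [a] = a := rfl

lemma cfEval_cons (a b : ℤ) (l : List ℤ) :
    cfEval (a :: b :: l) = (a : ℝ) + (cfEval (b :: l))⁻¹ := rfl

lemma cfIter_succ (x : ℝ) (n : ℕ) : cfIter x (n + 1) = cfStep (cfIter x n) := rfl

lemma cfIter_zero (x : ℝ) : cfIter x 0 = x := rfl

lemma cfIter_eq_zero {y : ℝ} {i : ℕ} (h : Int.fract (cfIter y i) = 0) :
    ∀ j, i < j → cfIter y j = 0 := by
  have key : ∀ d, cfIter y (i + 1 + d) = 0 := by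
    intro d
    induction d with
    | zero => simp [cfIter_succ, cfStep, h]
    | succ d ih =>
        have : cfIter y (i + 1 + (d + 1)) = cfStep (cfIter y (i + 1 + d)) := rfl
        rw [this, ih]
        simp [cfStep]
  intro j hj
  obtain ⟨d, rfl⟩ := Nat.exists_eq_add_of_le (Nat.succ_le_of_lt hj)
  exact key d

lemma fract_ne_zero_of_pquot_pos {y : ℝ} {k : ℕ} (hk : 0 < pquot y k) :
    ∀ i < k, Int.fract (cfIter y i) ≠ 0 := by
  intro i hik h0
  have : cfIter y k = 0 := cfIter_eq_zero h0 k hik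
  rw [pquot, this] at hk
  simp at hk

lemma one_lt_cfIter_succ {y : ℝ} {i : ℕ} (h : Int.fract (cfIter y i) ≠ 0) :
    1 < cfIter y (i + 1) := by
  rw [cfIter_succ, cfStep, if_neg h]
  have h0 : 0 < Int.fract (cfIter y i) :=
    lt_of_le_of_ne (Int.fract_nonneg _) (Ne.symm h)
  have h1 : Int.fract (cfIter y i) < 1 := Int.fract_lt_one _
  exact (one_lt_inv_iff₀).2 ⟨h0, h1⟩

lemma one_le_pquot {y : ℝ} {k i : ℕ} (hk : 0 < pquot y k) (h1 : 1 ≤ i) (hik : i ≤ k) :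
    1 ≤ pquot y i := by
  obtain ⟨j, rfl⟩ := Nat.exists_eq_add_of_le h1
  have hj : j < k := by omega
  have hf : Int.fract (cfIter y j) ≠ 0 := fract_ne_zero_of_pquot_pos hk j hj
  have h2 : 1 < cfIter y (j + 1) := one_lt_cfIter_succ hf
  have : (1 + j) = j + 1 := by omega
  rw [pquot, this]
  exact Int.le_floor.2 (by exact_mod_cast h2.le)

lemma one_le_cfEval (l : List ℤ) (h1 : ∀ z ∈ l, 1 ≤ z) (hne : l ≠ []) : 1 ≤ cfEval l := by
  induction l with
  | nil => simp at hne
  | cons a t ih =>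
      cases t with
      | nil =>
          rw [cfEval_singleton]
          exact_mod_cast h1 a (by simp)
      | cons b t' =>
          rw [cfEval_cons]
          have ht : 1 ≤ cfEval (b :: t') := ih (fun z hz => h1 z (by simp [hz])) (by simp)
          have ha : (1 : ℝ) ≤ (a : ℝ) := by exact_mod_cast h1 a (by simp)
          have : (0:ℝ) ≤ (cfEval (b :: t'))⁻¹ := inv_nonneg.2 (le_trans zero_le_one ht)
          linarith

lemma cfEval_cons_bounds (a : ℤ) (t : List ℤ) (hne : t ≠ []) (h1 : ∀ z ∈ t, 1 ≤ z) :
    (a : ℝ) < cfEval (a :: t) ∧ cfEval (a :: t) ≤ (a : ℝ) + 1 := by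
  obtain ⟨b, t', rfl⟩ := List.exists_cons_of_ne_nil hne
  rw [cfEval_cons]
  have ht : 1 ≤ cfEval (b :: t') := one_le_cfEval _ h1 (by simp)
  have hpos : 0 < cfEval (b :: t') := lt_of_lt_of_le zero_lt_one ht
  constructor
  · have : 0 < (cfEval (b :: t'))⁻¹ := inv_pos.2 hpos
    linarith
  · have : (cfEval (b :: t'))⁻¹ ≤ 1 := inv_le_one_of_one_le₀ ht
    linarith

lemma cfIter_inv_succ {y : ℝ} (hy : 1 < y) (n : ℕ) : cfIter y⁻¹ (n + 1) = cfIter y n := by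
  induction n with
  | zero =>
      have h0 : 0 < y⁻¹ := inv_pos.2 (lt_trans zero_lt_one hy)
      have h1 : y⁻¹ < 1 := inv_lt_one_of_one_lt₀ hy
      have hf : Int.fract (y⁻¹) = y⁻¹ := Int.fract_eq_self.2 ⟨h0.le, h1⟩
      have : cfIter y⁻¹ 1 = cfStep y⁻¹ := rfl
      rw [this, cfStep, hf, if_neg (ne_of_gt h0), inv_inv, cfIter_zero]
  | succ n ih =>
      rw [cfIter_succ, ih, ← cfIter_succ]

lemma pquot_inv_succ {y : ℝ} (hy : 1 < y) (n : ℕ) : pquot y⁻¹ (n + 1) = pquot y n := by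
  rw [pquot, pquot, cfIter_inv_succ hy]

lemma pquot_inv_zero {y : ℝ} (hy : 1 < y) : pquot y⁻¹ 0 = 0 := by
  rw [pquot, cfIter_zero]
  exact Int.floor_eq_zero_iff.2 ⟨(inv_pos.2 (lt_trans zero_lt_one hy)).le,
    inv_lt_one_of_one_lt₀ hy⟩

lemma floor_lt_of_lt_nat {y : ℝ} {a : ℕ} (h : y < a) : pquot y 0 < (a : ℤ) := by
  rw [pquot, cfIter_zero]
  exact Int.floor_lt.2 (by exact_mod_cast h)

open scoped Classical in
lemma ra_inv (a : ℕ) {y : ℝ} (hy1 : 1 < y) (hya : y < a) : ra a y⁻¹ = (ra a y)⁻¹ := by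
  by_cases h : ∃ i, 1 ≤ i ∧ (a : ℤ) ≤ pquot y i
  · obtain ⟨i, hi1, hia⟩ := h
    have h : ∃ i, 1 ≤ i ∧ (a : ℤ) ≤ pquot y i := ⟨i, hi1, hia⟩
    have h' : ∃ i, 1 ≤ i ∧ (a : ℤ) ≤ pquot y⁻¹ i := by
      refine ⟨Nat.find h + 1, by omega, ?_⟩
      rw [pquot_inv_succ hy1]
      exact (Nat.find_spec h).2
    have hk1 : 1 ≤ Nat.find h := (Nat.find_spec h).1
    have hfind : Nat.find h' = Nat.find h + 1 := by
      rw [Nat.find_eq_iff]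
      refine ⟨⟨by omega, by rw [pquot_inv_succ hy1]; exact (Nat.find_spec h).2⟩, ?_⟩
      intro m hm
      rintro ⟨hm1, hma⟩
      obtain ⟨j, rfl⟩ : ∃ j, m = j + 1 := ⟨m - 1, by omega⟩
      rw [pquot_inv_succ hy1] at hma
      rcases Nat.eq_zero_or_pos j with rfl | hj
      · exact absurd hma (not_le.2 (floor_lt_of_lt_nat hya))
      · exact Nat.find_min h (by omega) ⟨hj, hma⟩
    rw [ra, ra, dif_pos h, dif_pos h', hfind]
    have hlist : (List.range (Nat.find h + 1)).map (pquot y⁻¹) =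
        0 :: (List.range (Nat.find h)).map (pquot y) := by
      rw [List.range_succ_eq_map, List.map_cons, List.map_map, pquot_inv_zero hy1]
      congr 1
      apply List.map_congr_left
      intro j hj
      exact pquot_inv_succ hy1 j
    rw [hlist]
    obtain ⟨m, hm⟩ : ∃ m, Nat.find h = m + 1 := ⟨Nat.find h - 1, by omega⟩
    rw [hm, List.range_succ_eq_map, List.map_cons]
    rw [cfEval_cons]
    push_cast
    rw [zero_add]
  · have h' : ¬ ∃ i, 1 ≤ i ∧ (a : ℤ) ≤ pquot y⁻¹ i := by
      rintro ⟨i, hi1, hia⟩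
      obtain ⟨j, rfl⟩ : ∃ j, i = j + 1 := ⟨i - 1, by omega⟩
      rw [pquot_inv_succ hy1] at hia
      rcases Nat.eq_zero_or_pos j with rfl | hj
      · exact absurd hia (not_le.2 (floor_lt_of_lt_nat hya))
      · exact h ⟨j, hj, hia⟩
    rw [ra, ra, dif_neg h, dif_neg h']

open scoped Classical in
lemma ra_trunc_bounds (a : ℕ) {y : ℝ}
    (h : ∃ i, 1 ≤ i ∧ (a : ℤ) ≤ pquot y i) (ha : 1 ≤ a) :
    Int.fract y ≠ 0 ∧
    (ra a y = (⌊y⌋ : ℝ) ∨ ((⌊y⌋ : ℝ) < ra a y ∧ ra a y ≤ (⌊y⌋ : ℝ) + 1)) := by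
  have hk1 : 1 ≤ Nat.find h := (Nat.find_spec h).1
  have hka : (a : ℤ) ≤ pquot y (Nat.find h) := (Nat.find_spec h).2
  have hkpos : 0 < pquot y (Nat.find h) := lt_of_lt_of_le (by exact_mod_cast ha) hka
  have hfy : Int.fract y ≠ 0 := by
    have := fract_ne_zero_of_pquot_pos hkpos 0 (by omega)
    rwa [cfIter_zero] at this
  refine ⟨hfy, ?_⟩
  obtain ⟨m, hm⟩ : ∃ m, Nat.find h = m + 1 := ⟨Nat.find h - 1, by omega⟩
  have hra : ra a y = cfEval ((List.range (Nat.find h)).map (pquot y)) := dif_pos h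
  rw [hm, List.range_succ_eq_map, List.map_cons, List.map_map] at hra
  have hpq0 : pquot y 0 = ⌊y⌋ := rfl
  rcases Nat.eq_zero_or_pos m with rfl | hmpos
  · left
    rw [hra]
    simp [cfEval_singleton, hpq0]
  · right
    have hne : (List.range m).map (pquot y ∘ Nat.succ) ≠ [] := by
      simp [List.range_eq_nil]
      omega
    have hent : ∀ z ∈ (List.range m).map (pquot y ∘ Nat.succ), 1 ≤ z := by
      intro z hz
      obtain ⟨j, hj, rfl⟩ := List.mem_map.1 hz
      rw [List.mem_range] at hj
      exact one_le_pquot hkpos (by omega) (by omega)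
    have := cfEval_cons_bounds (pquot y 0) _ hne hent
    rw [← hra, hpq0] at this
    exact this

lemma one_lt_of_mem_lockZone {a : ℕ} {c y : ℝ} (ha : 1 ≤ a) (hc : 1 < c)
    (hy : y ∈ lockZone a c) : 1 < y := by
  obtain ⟨hIco, hra⟩ := hy
  by_cases h : ∃ i, 1 ≤ i ∧ (a : ℤ) ≤ pquot y i
  · obtain ⟨hfy, hcase⟩ := ra_trunc_bounds a h ha
    have hylb : (⌊y⌋ : ℝ) < y := by
      have h1 : y = ⌊y⌋ + Int.fract y := (Int.floor_add_fract y).symm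
      have h2 : 0 < Int.fract y := lt_of_le_of_ne (Int.fract_nonneg y) (Ne.symm hfy)
      linarith
    rcases hcase with hc1 | ⟨hlt, hle⟩
    · rw [hra] at hc1
      have : (1 : ℝ) < (⌊y⌋ : ℝ) := hc1 ▸ hc
      linarith
    · rw [hra] at hlt hle
      have h0 : (0 : ℝ) < (⌊y⌋ : ℝ) := by linarith
      have h1 : (1 : ℤ) ≤ ⌊y⌋ := by exact_mod_cast h0
      have : (1 : ℝ) ≤ (⌊y⌋ : ℝ) := by exact_mod_cast h1
      linarith
  · rw [ra, dif_neg h] at hra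
    rwa [hra]

lemma mem_Ioo_of_mem_lockZone_small {a : ℕ} {c y : ℝ} (ha : 1 ≤ a) (hc0 : 0 < c) (hc1 : c < 1)
    (hy : y ∈ lockZone a c) : 0 < y ∧ y < 1 := by
  obtain ⟨hIco, hra⟩ := hy
  by_cases h : ∃ i, 1 ≤ i ∧ (a : ℤ) ≤ pquot y i
  · obtain ⟨hfy, hcase⟩ := ra_trunc_bounds a h ha
    have hfl0 : (0 : ℤ) ≤ ⌊y⌋ := Int.floor_nonneg.2 hIco.1
    have hfleq : ⌊y⌋ = 0 := by
      rcases hcase with hc1' | ⟨hlt, hle⟩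
      · rw [hra] at hc1'
        by_contra hne
        have h1 : (1 : ℤ) ≤ ⌊y⌋ := by omega
        have : (1 : ℝ) ≤ (⌊y⌋ : ℝ) := by exact_mod_cast h1
        rw [← hc1'] at this
        linarith
      · rw [hra] at hlt
        have : (⌊y⌋ : ℝ) < 1 := lt_trans hlt hc1
        have h1 : ⌊y⌋ < 1 := by exact_mod_cast this
        omega
    have hyf : y = Int.fract y := by
      have := Int.floor_add_fract y
      rw [hfleq] at this
      simpa using this.symm
    constructor
    · rw [hyf]
      exact lt_of_le_of_ne (Int.fract_nonneg y) (Ne.symm hfy)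
    · rw [hyf]
      exact Int.fract_lt_one y
  · rw [ra, dif_neg h] at hra
    rw [hra]
    exact ⟨hc0, hc1⟩

open scoped Classical in
lemma lockZone_inv_eq (a : ℕ) (ha : 2 ≤ a) {x : ℝ} (hx1 : 1 < x) (hxa : x < a) :
    lockZone a x⁻¹ = (fun z => z⁻¹) '' lockZone a x := by
  have hx0 : 0 < x := lt_trans zero_lt_one hx1
  have hxi0 : 0 < x⁻¹ := inv_pos.2 hx0
  have hxi1 : x⁻¹ < 1 := inv_lt_one_of_one_lt₀ hx1
  have ha1 : 1 ≤ a := by omega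
  ext y
  constructor
  · intro hy
    obtain ⟨h0, h1⟩ := mem_Ioo_of_mem_lockZone_small ha1 hxi0 hxi1 hy
    obtain ⟨hIco, hra⟩ := hy
    set z := y⁻¹ with hz
    have hz1 : 1 < z := (one_lt_inv_iff₀).2 ⟨h0, h1⟩
    have hfl0 : ⌊y⌋ = 0 := Int.floor_eq_zero_iff.2 ⟨h0.le, h1⟩
    have hza : z < a := by
      by_contra hge
      push_neg at hge
      have hfz : (a : ℤ) ≤ ⌊z⌋ := Int.le_floor.2 (by exact_mod_cast hge)
      have hcf1 : cfIter y 1 = z := by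
        have hfy : Int.fract y = y := Int.fract_eq_self.2 ⟨h0.le, h1⟩
        rw [cfIter_succ, cfIter_zero, cfStep, hfy, if_neg (ne_of_gt h0)]
      have hpq1 : (a : ℤ) ≤ pquot y 1 := by rw [pquot, hcf1]; exact hfz
      have hE : ∃ i, 1 ≤ i ∧ (a : ℤ) ≤ pquot y i := ⟨1, le_refl 1, hpq1⟩
      have hfind : Nat.find hE = 1 := by
        rw [Nat.find_eq_iff]
        exact ⟨⟨le_refl 1, hpq1⟩, by intro m hm; omega⟩
      rw [ra, dif_pos hE, hfind] at hra
      rw [show (List.range 1).map (pquot y) = [pquot y 0] from rfl, cfEval_singleton,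
        show pquot y 0 = ⌊y⌋ from rfl, hfl0] at hra
      rw [← hra] at hxi0
      simp at hxi0
    have hkey : ra a z = x := by
      have := ra_inv a hz1 hza
      rw [hz, inv_inv] at this
      rw [hra] at this
      exact inv_injective this.symm
    exact ⟨z, ⟨⟨by positivity, hza⟩, hkey⟩, by simp [hz]⟩
  · rintro ⟨z, hz, rfl⟩
    have hz1 : 1 < z := one_lt_of_mem_lockZone ha1 hx1 hz
    obtain ⟨hIco, hra⟩ := hz
    have : ra a z⁻¹ = (ra a z)⁻¹ := ra_inv a hz1 hIco.2
    rw [hra] at this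
    refine ⟨⟨?_, ?_⟩, this⟩
    · positivity
    · have h1 : z⁻¹ < 1 := inv_lt_one_of_one_lt₀ hz1
      have : (1 : ℝ) < a := by exact_mod_cast (by omega : 1 < a)
      linarith

lemma inv_image_sSup_sInf {S : Set ℝ} (hne : S.Nonempty) (h1 : ∀ s ∈ S, 1 < s)
    (hbdd : BddAbove S) :
    sSup ((fun z => z⁻¹) '' S) = (sInf S)⁻¹ ∧ sInf ((fun z => z⁻¹) '' S) = (sSup S)⁻¹ := by
  have hbdb : BddBelow S := ⟨1, fun s hs => (h1 s hs).le⟩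
  have hm1 : 1 ≤ sInf S := le_csInf hne (fun s hs => (h1 s hs).le)
  have hm0 : 0 < sInf S := lt_of_lt_of_le zero_lt_one hm1
  obtain ⟨s₀, hs₀⟩ := id hne
  have hM1 : 1 < sSup S := lt_of_lt_of_le (h1 s₀ hs₀) (le_csSup hbdd hs₀)
  have hM0 : 0 < sSup S := lt_trans zero_lt_one hM1
  have hImne : ((fun z => z⁻¹) '' S).Nonempty := ⟨s₀⁻¹, ⟨s₀, hs₀, rfl⟩⟩
  constructor
  · apply IsLUB.csSup_eq _ hImne
    constructor
    · rintro t ⟨s, hs, rfl⟩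
      exact inv_anti₀ hm0 (csInf_le hbdb hs)
    · intro b hb
      have hb0 : 0 < b := lt_of_lt_of_le (inv_pos.2 (lt_trans zero_lt_one (h1 s₀ hs₀)))
        (hb ⟨s₀, hs₀, rfl⟩)
      have hlb : b⁻¹ ∈ lowerBounds S := by
        intro s hs
        exact inv_le_of_inv_le₀ (lt_trans zero_lt_one (h1 s hs)) (hb ⟨s, hs, rfl⟩)
      have : b⁻¹ ≤ sInf S := le_csInf hne hlb
      exact inv_le_of_inv_le₀ hb0 this
  · apply IsGLB.csInf_eq _ hImne
    constructor
    · rintro t ⟨s, hs, rfl⟩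
      exact inv_anti₀ (lt_trans zero_lt_one (h1 s hs)) (le_csSup hbdd hs)
    · intro b hb
      rcases le_or_gt b 0 with hb0 | hb0
      · exact le_trans hb0 (inv_pos.2 hM0).le
      · have hub : b⁻¹ ∈ upperBounds S := by
          intro s hs
          have := hb ⟨s, hs, rfl⟩
          exact le_inv_of_le_inv₀ hb0 this
        have : sSup S ≤ b⁻¹ := csSup_le hne hub
        exact le_inv_of_le_inv₀ hM0 this

/-- `ν^+(1/x) = 1/ν^-(x)` and `ν^-(1/x) = 1/ν^+(x)` for rationals
`x ∈ (1, a)` with all partial quotients `≤ a - 1`. -/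
theorem stmt_4 (a : ℕ) (ha : 2 ≤ a) (x : ℚ) (hx1 : 1 < (x : ℝ)) (hxa : (x : ℝ) < a)
    (hbd : ∀ i, 1 ≤ i → pquot (x : ℝ) i ≤ (a : ℤ) - 1) :
    nuPlus a ((x : ℝ)⁻¹) = (nuMinus a (x : ℝ))⁻¹ ∧
    nuMinus a ((x : ℝ)⁻¹) = (nuPlus a (x : ℝ))⁻¹ := by
  classical
  set S := lockZone a (x : ℝ) with hS
  have hrax : ra a (x : ℝ) = (x : ℝ) := by
    rw [ra, dif_neg]
    rintro ⟨i, hi1, hia⟩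
    have := hbd i hi1
    omega
  have hxmem : (x : ℝ) ∈ S := ⟨⟨le_of_lt (lt_trans zero_lt_one hx1), hxa⟩, hrax⟩
  have hne : S.Nonempty := ⟨_, hxmem⟩
  have h1 : ∀ s ∈ S, 1 < s := fun s hs => one_lt_of_mem_lockZone (by omega) hx1 hs
  have hbdd : BddAbove S := ⟨(a : ℝ), fun s hs => le_of_lt hs.1.2⟩
  have himg := lockZone_inv_eq a ha hx1 hxa
  obtain ⟨hSup, hInf⟩ := inv_image_sSup_sInf hne h1 hbdd
  constructor
  · rw [nuPlus, himg, nuMinus]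
    exact hSup
  · rw [nuMinus, himg, nuPlus]
    exact hInf
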